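/- arXiv:0911.1521 — 2 statements merged into one kernel-verified Lean document; each statement's English description precedes it below -/
import Mathlib

section
/- Let 𝔹^n ⊂ ℂ^n (n ≥ 2) be the open unit ball and let A be a map from the closed unit disc Δ̄ ⊂ ℂ to the closed unit ball with A(0) = 0. Then A is a stationary disc of 𝔹^n if and only if there exists v ∈ ℂ^n with |v| = 1 such that A(ζ) = ζ v for all ζ ∈ Δ̄. -/
/-!
Since `A 0 = 0`, write `A = ζ • B` with `B` holomorphic. On the circle `|B| = 1` and
`G = p · conj B`, so `∑ j, B_j G_j` is holomorphic on the disc with the real boundary values `p`.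
A holomorphic function with real boundary values is constant (the maximum principle for
`exp (± i f)` makes it real inside, then the open mapping theorem applies), so `p` is a constant
`c > 0`. Now `conj B_j = G_j / c` on the circle, so `B_j + G_j / c` and `i (B_j - G_j / c)` are
real there, hence constant, and `B` is a constant unit vector.
-/

open Complex Metric Set

/-- `A : Δ̄ → 𝔹̄ⁿ` is a stationary disc of the unit ball (with defining function
`ρ(z) = |z|² - 1`, whose Wirtinger gradient at `z` is `conj z`): `A` is continuous on
the closed unit disc, holomorphic on the open disc, nonconstant, maps the closed disc
into the closed ball and the unit circle into the unit sphere, and there is a positive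
continuous weight `p` on the circle such that `ζ ↦ ζ · p(ζ) · conj(A(ζ))` extends
continuously to the closed disc and holomorphically to the open disc. -/
def IsStationaryDiscBall {n : ℕ} (A : ℂ → EuclideanSpace ℂ (Fin n)) : Prop :=
  ContinuousOn A (closedBall 0 1) ∧
  DifferentiableOn ℂ A (ball 0 1) ∧
  (¬ ∃ c, ∀ ζ ∈ closedBall (0 : ℂ) 1, A ζ = c) ∧
  (∀ ζ ∈ closedBall (0 : ℂ) 1, ‖A ζ‖ ≤ 1) ∧
  (∀ ζ ∈ sphere (0 : ℂ) 1, ‖A ζ‖ = 1) ∧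
  ∃ p : ℂ → ℝ, ContinuousOn p (sphere 0 1) ∧ (∀ ζ ∈ sphere (0 : ℂ) 1, 0 < p ζ) ∧
    ∃ G : ℂ → EuclideanSpace ℂ (Fin n),
      ContinuousOn G (closedBall 0 1) ∧ DifferentiableOn ℂ G (ball 0 1) ∧
      ∀ ζ ∈ sphere (0 : ℂ) 1, ∀ j, G ζ j = ζ * (p ζ : ℂ) * (starRingEnd ℂ) (A ζ j)

open ComplexConjugate Topology

theorem Complex.mul_conj_eq_one_of_mem_sphere {ζ : ℂ} (hζ : ζ ∈ sphere (0 : ℂ) 1) :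
    ζ * conj ζ = 1 := by
  rw [mul_conj', mem_sphere_zero_iff_norm.1 hζ]
  norm_num

theorem EuclideanSpace.sum_mul_conj {ι : Type*} [Fintype ι] (x : EuclideanSpace ℂ ι) :
    ∑ j, x j * conj (x j) = (‖x‖ ^ 2 : ℝ) := by
  simp [EuclideanSpace.norm_sq_eq, mul_conj']

namespace DiffContOnCl

theorem dslope {E : Type*} [NormedAddCommGroup E] [NormedSpace ℂ E] [CompleteSpace E]
    {f : ℂ → E} {U : Set ℂ} {c : ℂ} (hf : DiffContOnCl ℂ f U) (hU : U ∈ 𝓝 c) :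
    DiffContOnCl ℂ (dslope f c) U :=
  ⟨(Complex.differentiableOn_dslope hU).2 hf.differentiableOn,
    (continuousOn_dslope (Filter.mem_of_superset hU subset_closure)).2
      ⟨hf.continuousOn, hf.differentiableAt' hU⟩⟩

theorem euclideanSpace_apply {ι : Type*} [Fintype ι] {f : ℂ → EuclideanSpace ℂ ι} {U : Set ℂ}
    (hf : DiffContOnCl ℂ f U) (j : ι) : DiffContOnCl ℂ (fun z => f z j) U :=
  ((EuclideanSpace.proj j).differentiable.comp_diffContOnCl hf :)

theorem finset_sum {ι E : Type*} [NormedAddCommGroup E] [NormedSpace ℂ E] {s : Finset ι}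
    {f : ι → ℂ → E} {U : Set ℂ} (hf : ∀ i ∈ s, DiffContOnCl ℂ (f i) U) :
    DiffContOnCl ℂ (fun z => ∑ i ∈ s, f i z) U :=
  ⟨DifferentiableOn.fun_sum fun i hi => (hf i hi).differentiableOn,
    continuousOn_finsetSum _ fun i hi => (hf i hi).continuousOn⟩

theorem re_le_zero_of_frontier_re_eq_zero {f : ℂ → ℂ} {U : Set ℂ} (hf : DiffContOnCl ℂ f U)
    (hU : Bornology.IsBounded U) (hre : ∀ z ∈ frontier U, (f z).re = 0) {z : ℂ}
    (hz : z ∈ closure U) : (f z).re ≤ 0 := by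
  have hexp : ‖exp (f z)‖ ≤ 1 :=
    norm_le_of_forall_mem_frontier_norm_le hU (differentiable_exp.comp_diffContOnCl hf)
      (fun w hw => by simp [norm_exp, hre w hw]) hz
  simpa [norm_exp] using hexp

theorem exists_eq_const_of_frontier_im_eq_zero {f : ℂ → ℂ} {U : Set ℂ}
    (hf : DiffContOnCl ℂ f U) (hUb : Bornology.IsBounded U) (hUo : IsOpen U)
    (hUc : IsConnected U) (him : ∀ z ∈ frontier U, (f z).im = 0) :
    ∃ c, ∀ z ∈ closure U, f z = c := by
  have him_closure : ∀ z ∈ closure U, (f z).im = 0 := fun z hz => by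
    have h₁ := (hf.const_smul I).re_le_zero_of_frontier_re_eq_zero hUb
      (fun w hw => by simp [him w hw]) hz
    have h₂ := (hf.const_smul (-I)).re_le_zero_of_frontier_re_eq_zero hUb
      (fun w hw => by simp [him w hw]) hz
    simp only [Pi.smul_apply, smul_eq_mul, mul_re, I_re, I_im, neg_re, neg_im] at h₁ h₂
    linarith
  obtain ⟨c, hc⟩ := (hf.differentiableOn.analyticOnNhd hUo).eq_const_of_im_eq_const
    (fun z hz => him_closure z (subset_closure hz)) hUo hUc
  exact ⟨c, fun z hz => EqOn.of_subset_closure hc hf.continuousOn continuousOn_const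
    subset_closure subset_rfl hz⟩

theorem exists_eq_const_of_frontier_conj_eq {f g : ℂ → ℂ} {U : Set ℂ}
    (hf : DiffContOnCl ℂ f U) (hg : DiffContOnCl ℂ g U) (hUb : Bornology.IsBounded U)
    (hUo : IsOpen U) (hUc : IsConnected U) (hfg : ∀ z ∈ frontier U, conj (f z) = g z) :
    ∃ c, ∀ z ∈ closure U, f z = c := by
  obtain ⟨a, ha⟩ := (hf.add hg).exists_eq_const_of_frontier_im_eq_zero hUb hUo hUc
    (fun z hz => by simp [← hfg z hz])
  obtain ⟨b, hb⟩ := ((hf.sub hg).const_smul I).exists_eq_const_of_frontier_im_eq_zero hUb hUo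
    hUc (fun z hz => by simp [← hfg z hz])
  refine ⟨(a - I * b) / 2, fun z hz => ?_⟩
  have ha' := ha z hz
  have hb' := hb z hz
  simp only [Pi.add_apply, Pi.smul_apply, Pi.sub_apply, smul_eq_mul] at ha' hb'
  linear_combination (ha' - I * hb') / 2 + (f z - g z) / 2 * I_sq

variable {n : ℕ} {B G : ℂ → EuclideanSpace ℂ (Fin n)} {U : Set ℂ}

theorem weight_eq_of_frontier_eq_mul_conj {p : ℂ → ℝ} (hB : DiffContOnCl ℂ B U)
    (hG : DiffContOnCl ℂ G U) (hUb : Bornology.IsBounded U) (hUo : IsOpen U)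
    (hUc : IsConnected U) (hBn : ∀ z ∈ frontier U, ‖B z‖ = 1)
    (hBG : ∀ z ∈ frontier U, ∀ j, G z j = p z * conj (B z j)) :
    ∀ z ∈ frontier U, ∀ w ∈ frontier U, p z = p w := by
  have hφ : DiffContOnCl ℂ (fun z => ∑ j, B z j * G z j) U :=
    finset_sum fun j _ => (hB.euclideanSpace_apply j).smul (hG.euclideanSpace_apply j)
  have hφp : ∀ z ∈ frontier U, ∑ j, B z j * G z j = p z := fun z hz => by
    simp_rw [hBG z hz, mul_left_comm _ (p z : ℂ), ← Finset.mul_sum,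
      EuclideanSpace.sum_mul_conj, hBn z hz]
    simp
  obtain ⟨c, hc⟩ := hφ.exists_eq_const_of_frontier_im_eq_zero hUb hUo hUc
    (fun z hz => by rw [hφp z hz, ofReal_im])
  intro z hz w hw
  have hpc : ∀ z ∈ frontier U, (p z : ℂ) = c := fun z hz => by
    rw [← hφp z hz, hc z (frontier_subset_closure hz)]
  exact_mod_cast (hpc z hz).trans (hpc w hw).symm

theorem exists_eq_const_of_frontier_eq_mul_conj {c : ℂ} (hB : DiffContOnCl ℂ B U)
    (hG : DiffContOnCl ℂ G U) (hUb : Bornology.IsBounded U) (hUo : IsOpen U)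
    (hUc : IsConnected U) (hc : c ≠ 0) (hBG : ∀ z ∈ frontier U, ∀ j, G z j = c * conj (B z j)) :
    ∃ v, ∀ z ∈ closure U, B z = v := by
  have hBj : ∀ j, ∃ a, ∀ z ∈ closure U, B z j = a := fun j =>
    (hB.euclideanSpace_apply j).exists_eq_const_of_frontier_conj_eq
      ((hG.euclideanSpace_apply j).const_smul c⁻¹) hUb hUo hUc
      (fun z hz => by simp [hBG z hz j, hc])
  choose a ha using hBj
  exact ⟨WithLp.toLp 2 a, fun z hz => PiLp.ext fun j => ha j z hz⟩

end DiffContOnCl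

section

variable {n : ℕ} {A : ℂ → EuclideanSpace ℂ (Fin n)}

theorem IsStationaryDiscBall.exists_eq_smul_of_apply_zero (hA : IsStationaryDiscBall A)
    (h0 : A 0 = 0) : ∃ v : EuclideanSpace ℂ (Fin n), ‖v‖ = 1 ∧
      ∀ ζ ∈ closedBall (0 : ℂ) 1, A ζ = ζ • v := by
  obtain ⟨hAc, hAd, -, -, hAn, p, -, hp, G, hGc, hGd, hGA⟩ := hA
  have hcl : closure (ball (0 : ℂ) 1) = closedBall 0 1 := closure_ball 0 one_ne_zero
  have hfr : frontier (ball (0 : ℂ) 1) = sphere 0 1 := frontier_ball 0 one_ne_zero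
  have h1 : (1 : ℂ) ∈ sphere (0 : ℂ) 1 := by simp
  set B := dslope A 0
  have hAB : ∀ ζ, A ζ = ζ • B ζ := fun ζ => by simpa [h0] using (sub_smul_dslope A 0 ζ).symm
  have hB : DiffContOnCl ℂ B (ball 0 1) :=
    (DiffContOnCl.mk_ball hAd hAc).dslope (ball_mem_nhds 0 one_pos)
  have hG : DiffContOnCl ℂ G (ball 0 1) := .mk_ball hGd hGc
  have hBn : ∀ ζ ∈ sphere (0 : ℂ) 1, ‖B ζ‖ = 1 := fun ζ hζ => by
    simpa [hAB ζ, norm_smul, mem_sphere_zero_iff_norm.1 hζ] using hAn ζ hζ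
  have hBG : ∀ ζ ∈ sphere (0 : ℂ) 1, ∀ j, G ζ j = p ζ * conj (B ζ j) := fun ζ hζ j => by
    rw [hGA ζ hζ j, hAB ζ, PiLp.smul_apply, smul_eq_mul, map_mul]
    linear_combination (p ζ * conj (B ζ j) : ℂ) * mul_conj_eq_one_of_mem_sphere hζ
  have hp1 : ∀ ζ ∈ sphere (0 : ℂ) 1, p ζ = p 1 := by
    have := hB.weight_eq_of_frontier_eq_mul_conj hG isBounded_ball isOpen_ball
      (isConnected_ball one_pos) (hfr ▸ hBn) (hfr ▸ hBG)
    rw [hfr] at this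
    exact fun ζ hζ => this ζ hζ 1 h1
  obtain ⟨v, hv⟩ := hB.exists_eq_const_of_frontier_eq_mul_conj hG isBounded_ball isOpen_ball
    (isConnected_ball one_pos) (ofReal_ne_zero.2 (hp 1 h1).ne')
    (hfr ▸ fun ζ hζ j => by rw [hBG ζ hζ j, hp1 ζ hζ])
  rw [hcl] at hv
  refine ⟨v, ?_, fun ζ hζ => by rw [hAB ζ, hv ζ hζ]⟩
  rw [← hv 1 (sphere_subset_closedBall h1), hBn 1 h1]

theorem isStationaryDiscBall_of_eq_smul {v : EuclideanSpace ℂ (Fin n)} (hv : ‖v‖ = 1)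
    (hAv : ∀ ζ ∈ closedBall (0 : ℂ) 1, A ζ = ζ • v) : IsStationaryDiscBall A := by
  have hAv' : ∀ ζ ∈ sphere (0 : ℂ) 1, A ζ = ζ • v := fun ζ hζ =>
    hAv ζ (sphere_subset_closedBall hζ)
  refine ⟨(continuous_id.smul continuous_const).continuousOn.congr hAv,
    (differentiable_id.smul_const v).differentiableOn.congr
      fun ζ hζ => hAv ζ (ball_subset_closedBall hζ), ?_, ?_, ?_, ?_⟩
  · rintro ⟨c, hc⟩
    have hv0 : v = 0 := by
      simpa [hAv 1 (by simp), hAv 0 (by simp)] using (hc 1 (by simp)).trans (hc 0 (by simp)).symm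
    simp [hv0] at hv
  · intro ζ hζ
    simpa [hAv ζ hζ, norm_smul, hv] using hζ
  · intro ζ hζ
    simpa [hAv' ζ hζ, norm_smul, hv] using hζ
  · refine ⟨fun _ => 1, continuousOn_const, fun _ _ => one_pos,
      fun _ => WithLp.toLp 2 fun j => conj (v j), continuousOn_const, differentiableOn_const _,
      fun ζ hζ j => ?_⟩
    simp only [hAv' ζ hζ, PiLp.smul_apply, smul_eq_mul, map_mul, ofReal_one, mul_one]
    linear_combination (-conj (v j)) * mul_conj_eq_one_of_mem_sphere hζ

end

theorem stationary_disc_ball_through_origin_iff_linear_general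
    {n : ℕ} (A : ℂ → EuclideanSpace ℂ (Fin n)) (h0 : A 0 = 0) :
    IsStationaryDiscBall A ↔
      ∃ v : EuclideanSpace ℂ (Fin n), ‖v‖ = 1 ∧
        ∀ ζ ∈ closedBall (0 : ℂ) 1, A ζ = ζ • v :=
  ⟨fun hA => hA.exists_eq_smul_of_apply_zero h0,
    fun ⟨_, hv, hAv⟩ => isStationaryDiscBall_of_eq_smul hv hAv⟩

/-- **The stationary discs of the ball through the origin are exactly the linear discs**
`ζ ↦ ζ v` with `|v| = 1`. -/
theorem stationary_disc_ball_through_origin_iff_linear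
    {n : ℕ} (hn : 2 ≤ n) (A : ℂ → EuclideanSpace ℂ (Fin n))
    (hA : ∀ ζ ∈ closedBall (0 : ℂ) 1, ‖A ζ‖ ≤ 1) (h0 : A 0 = 0) :
    IsStationaryDiscBall A ↔
      ∃ v : EuclideanSpace ℂ (Fin n), ‖v‖ = 1 ∧
        ∀ ζ ∈ closedBall (0 : ℂ) 1, A ζ = ζ • v :=
  stationary_disc_ball_through_origin_iff_linear_general A h0
end

section
/- Fix n ≥ 2 and r ∈ (0,1]. Define Φ from {z ∈ ℂ^n : |z| = 1, zₙ ≠ 0} to ℂ^n × ℂ^{n-1} by Φ(z) = (r z, (conj(z₁)/conj(zₙ), …, conj(z_{n-1})/conj(zₙ))). Then for every z in the domain, letting T_z = {v ∈ ℂ^n : Re⟨z, v⟩ = 0} be the real tangent space to the unit sphere at z, and letting W be the image of T_z under the real (Fréchet) derivative of Φ at z, the real subspace W ⊆ ℂ^n × ℂ^{n-1} satisfies W ∩ (i·W) = {0}; that is, the image of the sphere under Φ is a totally real submanifold of ℂ^n × ℂ^{n-1}. -/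
open Complex Metric Set
open scoped InnerProductSpace

/-- The chart map `Φ(z) = (r z, (conj z₁ / conj zₙ, …, conj z_{n-1} / conj zₙ))`,
sending a point of the unit sphere to the lift (in an affine chart of `ℙT*ℂⁿ`) of the
stationary disc of the ball through `0` and `z`, at the parameter `r`. -/
noncomputable def PhiLift (n : ℕ) (hn : 2 ≤ n) (r : ℝ)
    (z : EuclideanSpace ℂ (Fin n)) :
    EuclideanSpace ℂ (Fin n) × EuclideanSpace ℂ (Fin (n - 1)) :=
  ((r : ℂ) • z,
    WithLp.toLp 2 (fun j : Fin (n - 1) =>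
      (starRingEnd ℂ) (z ⟨j.1, Nat.lt_of_lt_of_le j.isLt (Nat.sub_le n 1)⟩) /
        (starRingEnd ℂ) (z ⟨n - 1, Nat.sub_lt (by omega) one_pos⟩)))

/-! The real derivative of `Φ` at `z` is `v ↦ (r v, conj (D v))`, where `D` is the complex
derivative of the holomorphic map `w ↦ (w_j / w_n)_j`, whose kernel is `ℂ z`. If
`Φ'(v) = i Φ'(u)` with `u, v` tangent, the first component forces `v = i u`; the second one is
conjugate-linear, so `conj (D u) = -conj (D u)` and `u ∈ ℂ z`. As `u` and `i u` are both tangent,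
`⟪z, u⟫ = 0`, hence `u = 0`. -/

open ComplexConjugate

section TotallyReal

variable {E F : Type*} [AddCommGroup E] [Module ℂ E] [AddCommGroup F] [Module ℂ F]

theorem image_inter_I_smul_image_eq_singleton_zero (L : E →ₗ[ℝ] E × F) {r : ℝ} (hr : r ≠ 0)
    (hL₁ : ∀ v, (L v).1 = (r : ℂ) • v) (hL₂ : ∀ v, (L (I • v)).2 = -(I • (L v).2))
    {S : Set E} (hS₀ : 0 ∈ S) (hS : ∀ u ∈ S, I • u ∈ S → (L u).2 = 0 → u = 0) :
    L '' S ∩ (fun x => I • x) '' (L '' S) = {0} := by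
  refine Set.eq_singleton_iff_unique_mem.2
    ⟨⟨⟨0, hS₀, map_zero L⟩, 0, ⟨0, hS₀, map_zero L⟩, smul_zero I⟩, ?_⟩
  rintro _ ⟨⟨v, hv, rfl⟩, _, ⟨u, hu, rfl⟩, huv⟩
  have hvu : v = I • u := by
    have h := congrArg Prod.fst huv
    rw [Prod.smul_fst, hL₁, hL₁, smul_comm] at h
    exact (smul_right_injective E (Complex.ofReal_ne_zero.2 hr) h).symm
  have hu₂ : (L u).2 = 0 := by
    have h := congrArg Prod.snd huv
    rw [Prod.smul_snd, hvu, hL₂, eq_neg_iff_add_eq_zero, ← two_smul ℂ, smul_smul,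
      smul_eq_zero] at h
    exact h.resolve_left (by norm_num)
  rw [← huv, hS u hu (hvu ▸ hv) hu₂, map_zero]
  exact smul_zero I

end TotallyReal

theorem inner_eq_zero_of_re_inner_eq_zero_of_re_inner_I_smul {E : Type*}
    [SeminormedAddCommGroup E] [InnerProductSpace ℂ E] {z u : E}
    (h : (⟪z, u⟫_ℂ).re = 0) (hI : (⟪z, I • u⟫_ℂ).re = 0) : ⟪z, u⟫_ℂ = 0 := by
  rw [inner_smul_right, Complex.I_mul_re, neg_eq_zero] at hI
  exact Complex.ext h hI
open ComplexConjugate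

section Quotient

variable {ι : Type*} [Fintype ι]

theorem hasFDerivAt_apply_div_apply {a N : ι} {z : EuclideanSpace ℂ ι} (hz : z N ≠ 0) :
    HasFDerivAt (fun w : EuclideanSpace ℂ ι => w a / w N)
      ((z N ^ 2)⁻¹ • (z N • EuclideanSpace.proj (𝕜 := ℂ) a - z a • EuclideanSpace.proj N))
      z := by
  have hinv : HasFDerivAt (fun w : EuclideanSpace ℂ ι => (w N)⁻¹) _ z :=
    (hasFDerivAt_inv hz).comp z (PiLp.hasFDerivAt_apply 2 z N)
  simp only [div_eq_mul_inv]
  refine ((PiLp.hasFDerivAt_apply 2 z a).fun_mul hinv).congr_fderiv ?_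
  ext v
  simp only [add_apply, smul_apply, sub_apply, ContinuousLinearMap.comp_apply, PiLp.proj_apply,
    ContinuousLinearMap.toSpanSingleton_apply, smul_eq_mul]
  field_simp
  ring

theorem hasFDerivAt_conj_apply_div_conj_apply {a N : ι} {z : EuclideanSpace ℂ ι}
    (hz : z N ≠ 0) :
    HasFDerivAt (fun w : EuclideanSpace ℂ ι => conj (w a) / conj (w N))
      (conjCLE.toContinuousLinearMap.comp (((z N ^ 2)⁻¹ •
        (z N • EuclideanSpace.proj (𝕜 := ℂ) a - z a • EuclideanSpace.proj N)).restrictScalars ℝ))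
      z := by
  simp_rw [← map_div₀]
  exact conjCLE.hasFDerivAt.comp z ((hasFDerivAt_apply_div_apply hz).restrictScalars ℝ)

end Quotient

theorem fderiv_phiLift_apply {n : ℕ} (hn : 2 ≤ n) (r : ℝ) {z : EuclideanSpace ℂ (Fin n)}
    (hzn : z ⟨n - 1, Nat.sub_lt (by omega) one_pos⟩ ≠ 0) (v : EuclideanSpace ℂ (Fin n)) :
    fderiv ℝ (PhiLift n hn r) z v =
      ((r : ℂ) • v, WithLp.toLp 2 fun j : Fin (n - 1) =>
        conj ((z ⟨n - 1, Nat.sub_lt (by omega) one_pos⟩ ^ 2)⁻¹ *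
          (z ⟨n - 1, Nat.sub_lt (by omega) one_pos⟩ * v (Fin.castLE (Nat.sub_le n 1) j) -
            z (Fin.castLE (Nat.sub_le n 1) j) * v ⟨n - 1, Nat.sub_lt (by omega) one_pos⟩))) := by
  have hquot : HasFDerivAt (fun w : EuclideanSpace ℂ (Fin n) => fun j : Fin (n - 1) =>
      conj (w (Fin.castLE (Nat.sub_le n 1) j)) /
        conj (w ⟨n - 1, Nat.sub_lt (by omega) one_pos⟩)) _ z :=
    hasFDerivAt_pi.2 fun j => hasFDerivAt_conj_apply_div_conj_apply hzn
  have hsnd := (PiLp.hasFDerivAt_toLp (𝕜 := ℝ) 2 _).comp z hquot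
  have hΦ : HasFDerivAt (PhiLift n hn r) _ z :=
    ((hasFDerivAt_id z).const_smul (r : ℂ)).prodMk hsnd
  rw [hΦ.fderiv]
  simp

theorem mem_span_singleton_of_mul_apply_eq {ι : Type*} {z u : EuclideanSpace ℂ ι} {N : ι}
    (hz : z N ≠ 0) (h : ∀ k, z N * u k = z k * u N) : u ∈ ℂ ∙ z := by
  refine Submodule.mem_span_singleton.2 ⟨u N / z N, ?_⟩
  ext k
  simp only [PiLp.smul_apply, smul_eq_mul]
  field_simp
  linear_combination (h k).symm

theorem mem_span_singleton_of_fderiv_phiLift_snd_eq_zero {n : ℕ} (hn : 2 ≤ n) (r : ℝ)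
    {z : EuclideanSpace ℂ (Fin n)} (hzn : z ⟨n - 1, Nat.sub_lt (by omega) one_pos⟩ ≠ 0)
    {u : EuclideanSpace ℂ (Fin n)} (hu : (fderiv ℝ (PhiLift n hn r) z u).2 = 0) :
    u ∈ ℂ ∙ z := by
  refine mem_span_singleton_of_mul_apply_eq hzn fun ⟨k, hk⟩ => ?_
  by_cases hkN : k < n - 1
  · have h := congrArg (· ⟨k, hkN⟩) hu
    simp only [fderiv_phiLift_apply hn r hzn, PiLp.zero_apply, map_eq_zero, mul_eq_zero,
      inv_eq_zero, pow_eq_zero_iff two_ne_zero, hzn, false_or, sub_eq_zero] at h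
    exact h
  · obtain rfl : k = n - 1 := by omega
    ring

/-- **The union of the lifts of the stationary discs through the origin is totally real
away from the fiber over the origin.** For any `0 < r ≤ 1` and any point `z` of the unit
sphere with `zₙ ≠ 0`, the image under the real derivative of `Φ` at `z` of the real
tangent space `T_z = {v : Re⟪z, v⟫ = 0}` to the sphere is a real subspace `W` of
`ℂⁿ × ℂⁿ⁻¹` satisfying `W ∩ i·W = {0}`. -/
theorem lift_of_stationary_discs_totally_real
    {n : ℕ} (hn : 2 ≤ n) (r : ℝ) (hr0 : 0 < r)
    (z : EuclideanSpace ℂ (Fin n))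
    (hzn : z ⟨n - 1, Nat.sub_lt (by omega) one_pos⟩ ≠ 0)
    (W : Set (EuclideanSpace ℂ (Fin n) × EuclideanSpace ℂ (Fin (n - 1))))
    (hW : W = fderiv ℝ (PhiLift n hn r) z ''
      {v : EuclideanSpace ℂ (Fin n) | (⟪z, v⟫_ℂ).re = 0}) :
    W ∩ ((fun x => (Complex.I : ℂ) • x) '' W) = {0} := by
  subst hW
  refine image_inter_I_smul_image_eq_singleton_zero (fderiv ℝ (PhiLift n hn r) z).toLinearMap
    hr0.ne'
    (fun v => by simp [fderiv_phiLift_apply hn r hzn]) (fun v => ?_) (by simp)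
    fun u hu hIu hu₂ => ?_
  · ext j
    simp only [ContinuousLinearMap.coe_coe, fderiv_phiLift_apply hn r hzn, PiLp.smul_apply,
      PiLp.neg_apply, smul_eq_mul, map_mul, map_sub, conj_I]
    ring
  · exact Submodule.disjoint_def.1 (ℂ ∙ z).orthogonal_disjoint u
      (mem_span_singleton_of_fderiv_phiLift_snd_eq_zero hn r hzn hu₂)
      (Submodule.mem_orthogonal_singleton_iff_inner_right.2
        (inner_eq_zero_of_re_inner_eq_zero_of_re_inner_I_smul hu hIu))
end
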